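/- arXiv:2106.11224 — 3 statements merged into one kernel-verified Lean document; each statement's English description precedes it below -/
import Mathlib

section
/- Suppose the impulsive system Σ satisfies Assumption 1 and there exist β* ∈ 𝒦𝓛 and γ* ∈ 𝒦∞ such that every solution satisfies, for all t > τ₀, ‖φ(t,t₀,φ₀,d₁,d₂)‖ ≤ β*(‖φ(τ₀⁺,t₀,φ₀,d₁,d₂)‖, t) + γ*(d). Then Σ is ISS, i.e., there exist β ∈ 𝒦𝓛 and γ ∈ 𝒦∞ such that ‖φ(t,t₀,φ₀,d₁,d₂)‖ ≤ β(‖φ₀‖, t) + γ(d) for all t ≥ t₀, all initial states φ₀ ∈ X and all inputs (d₁,d₂) ∈ 𝒰₁ × 𝒰₂. -/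
open Set Filter

/-- Class 𝒦: continuous, zero at zero, strictly increasing on `[0,∞)`. -/
def ClassK (f : ℝ → ℝ) : Prop :=
  ContinuousOn f (Ici 0) ∧ f 0 = 0 ∧ StrictMonoOn f (Ici 0)

/-- Class 𝒦∞: class 𝒦 and unbounded. -/
def ClassKInf (f : ℝ → ℝ) : Prop :=
  ClassK f ∧ Tendsto f atTop atTop

/-- Class 𝒫: continuous, nonnegative on `[0,∞)`, vanishing exactly at zero. -/
def ClassP (f : ℝ → ℝ) : Prop :=
  ContinuousOn f (Ici 0) ∧ (∀ r ≥ (0:ℝ), 0 ≤ f r) ∧ ∀ r ≥ (0:ℝ), (f r = 0 ↔ r = 0)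

/-- Class 𝒦𝓛. -/
def ClassKL (β : ℝ → ℝ → ℝ) : Prop :=
  (∀ t ≥ (0:ℝ), ClassK fun s => β s t) ∧
  ∀ s ≥ (0:ℝ), AntitoneOn (fun t => β s t) (Ici 0) ∧
    Tendsto (fun t => β s t) atTop (nhds 0)

/-- Supremum norm of a continuous-time input. -/
noncomputable def supNormC {U : Type*} [NormedAddCommGroup U] (d : ℝ → U) : ℝ :=
  ⨆ t, ‖d t‖

/-- Supremum norm of a discrete-time input. -/
noncomputable def supNormD {U : Type*} [NormedAddCommGroup U] (d : ℕ → U) : ℝ :=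
  ⨆ k, ‖d k‖

/-- Bounded continuous-time inputs. -/
def BddInputC {U : Type*} [NormedAddCommGroup U] (d : ℝ → U) : Prop :=
  BddAbove (range fun t => ‖d t‖)

/-- Bounded discrete-time inputs. -/
def BddInputD {U : Type*} [NormedAddCommGroup U] (d : ℕ → U) : Prop :=
  BddAbove (range fun k => ‖d k‖)

/-!
Between consecutive impulse times Assumption 1 bounds the flow, and at each impulse it bounds the
jump; since `f (a + b) ≤ f (2 a) + f (2 b)` for `f ∈ 𝒦`, these bounds compose, so by induction
`‖φ t‖ ≤ Ξ ‖x‖ + H d` on `[t₀, τ_N]` with `Ξ, H ∈ 𝒦`, where `τ_N ≥ 0`. In particular the post-jump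
state `φ(τ₀⁺)` is bounded this way, which turns the hypothesis into a `𝒦𝓛` estimate in `‖x‖` for
`t > τ_N`. The two estimates glue to one, the first one being absorbed by `exp (τ_N - t) Ξ ‖x‖`.
-/

namespace ClassK

variable {f g : ℝ → ℝ}

lemma monotoneOn (hf : ClassK f) : MonotoneOn f (Ici 0) :=
  hf.2.2.monotoneOn

lemma nonneg (hf : ClassK f) {r : ℝ} (hr : 0 ≤ r) : 0 ≤ f r := by
  simpa only [hf.2.1] using hf.monotoneOn (mem_Ici.2 le_rfl) (mem_Ici.2 hr) hr

lemma map_le_map (hf : ClassK f) {a b : ℝ} (ha : 0 ≤ a) (hab : a ≤ b) : f a ≤ f b :=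
  hf.monotoneOn (mem_Ici.2 ha) (mem_Ici.2 (ha.trans hab)) hab

lemma add (hf : ClassK f) (hg : ClassK g) : ClassK fun r => f r + g r := by
  refine ⟨hf.1.add hg.1, by simp only [hf.2.1, hg.2.1, add_zero], ?_⟩
  intro a ha b hb hab
  exact add_lt_add (hf.2.2 ha hb hab) (hg.2.2 ha hb hab)

lemma comp (hf : ClassK f) (hg : ClassK g) : ClassK fun r => f (g r) := by
  have hmaps : MapsTo g (Ici 0) (Ici 0) := fun r hr => mem_Ici.2 (hg.nonneg hr)
  refine ⟨hf.1.comp hg.1 hmaps, by simp only [hg.2.1, hf.2.1], ?_⟩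
  intro a ha b hb hab
  exact hf.2.2 (hmaps ha) (hmaps hb) (hg.2.2 ha hb hab)

lemma const_mul (hf : ClassK f) {c : ℝ} (hc : 0 < c) : ClassK fun r => c * f r := by
  refine ⟨continuousOn_const.mul hf.1, by simp only [hf.2.1, mul_zero], ?_⟩
  intro a ha b hb hab
  exact mul_lt_mul_of_pos_left (hf.2.2 ha hb hab) hc

/-- Since `a + b ≤ 2 * max a b`. -/
lemma map_le_of_le_add (hf : ClassK f) {u a b : ℝ} (hu : 0 ≤ u) (ha : 0 ≤ a) (hb : 0 ≤ b)
    (h : u ≤ a + b) : f u ≤ f (2 * a) + f (2 * b) := by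
  rcases le_total a b with hab | hab
  · linarith [hf.map_le_map hu (by linarith : u ≤ 2 * b), hf.nonneg (by linarith : 0 ≤ 2 * a)]
  · linarith [hf.map_le_map hu (by linarith : u ≤ 2 * a), hf.nonneg (by linarith : 0 ≤ 2 * b)]

end ClassK

lemma ClassKInf.add_classK {f g : ℝ → ℝ} (hf : ClassKInf f) (hg : ClassK g) :
    ClassKInf fun r => f r + g r := by
  refine ⟨hf.1.add hg, tendsto_atTop_mono' atTop ?_ hf.2⟩
  filter_upwards [eventually_ge_atTop 0] with r hr
  linarith [hg.nonneg hr]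

namespace ClassKL

variable {β : ℝ → ℝ → ℝ}

lemma comp_classK (hβ : ClassKL β) {f : ℝ → ℝ} (hf : ClassK f) :
    ClassKL fun s t => β (f s) t :=
  ⟨fun t ht => (hβ.1 t ht).comp hf, fun s hs => hβ.2 (f s) (hf.nonneg hs)⟩

/-- Adding `exp (T - t) * Ξ s` keeps a `𝒦𝓛` bound above `Ξ s` up to time `T`; the `max t 0`
removes the junk values of `β` at negative times. -/
lemma add_exp_mul (hβ : ClassKL β) {Ξ : ℝ → ℝ} (hΞ : ClassK Ξ) (T : ℝ) :
    ClassKL fun s t => β s (max t 0) + Real.exp (T - t) * Ξ s := by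
  refine ⟨fun t ht => ?_, fun s hs => ⟨fun a ha b hb hab => ?_, ?_⟩⟩
  · simpa only [max_eq_left ht] using (hβ.1 t ht).add (hΞ.const_mul (Real.exp_pos _))
  · simp only [max_eq_left (mem_Ici.1 ha), max_eq_left (mem_Ici.1 hb)]
    have hexp : Real.exp (T - b) ≤ Real.exp (T - a) := Real.exp_le_exp.2 (by linarith)
    linarith [(hβ.2 s hs).1 ha hb hab, mul_le_mul_of_nonneg_right hexp (hΞ.nonneg hs)]
  · have hβlim : Tendsto (fun t => β s (max t 0)) atTop (nhds 0) := by
      refine (hβ.2 s hs).2.congr' ?_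
      filter_upwards [eventually_ge_atTop 0] with t ht
      rw [max_eq_left ht]
    have hexplim : Tendsto (fun t => Real.exp (T - t) * Ξ s) atTop (nhds 0) := by
      have := (Real.tendsto_exp_neg_atTop_nhds_zero.const_mul (Real.exp T)).mul_const (Ξ s)
      simpa only [mul_zero, zero_mul, ← Real.exp_add, ← sub_eq_add_neg] using this
    simpa only [add_zero] using hβlim.add hexplim

end ClassKL

section Inputs

variable {U U₁ U₂ : Type*} [NormedAddCommGroup U] [NormedAddCommGroup U₁]
  [NormedAddCommGroup U₂]

lemma range_norm_comp_add_right (d : ℝ → U) (s : ℝ) :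
    (range fun t => ‖d (t + s)‖) = range fun t => ‖d t‖ :=
  (Equiv.addRight s).surjective.range_comp fun t => ‖d t‖

lemma supNormC_comp_add_right (d : ℝ → U) (s : ℝ) :
    supNormC (fun t => d (t + s)) = supNormC d := by
  rw [supNormC, supNormC, iSup, iSup, range_norm_comp_add_right]

lemma BddInputC.comp_add_right {d : ℝ → U} (hd : BddInputC d) (s : ℝ) :
    BddInputC fun t => d (t + s) := by
  rwa [BddInputC, range_norm_comp_add_right]

lemma supNormC_nonneg {d : ℝ → U} (hd : BddInputC d) : 0 ≤ supNormC d :=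
  (norm_nonneg (d 0)).trans (le_ciSup hd 0)

/-- The input magnitude `d` of the paper. -/
noncomputable def inputNorm (d₁ : ℝ → U₁) (d₂ : ℕ → U₂) : ℝ :=
  max (supNormC d₁) (supNormD d₂)

lemma inputNorm_nonneg {d₁ : ℝ → U₁} (hd₁ : BddInputC d₁) (d₂ : ℕ → U₂) :
    0 ≤ inputNorm d₁ d₂ :=
  (supNormC_nonneg hd₁).trans (le_max_left _ _)

lemma supNormC_le_inputNorm (d₁ : ℝ → U₁) (d₂ : ℕ → U₂) : supNormC d₁ ≤ inputNorm d₁ d₂ :=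
  le_max_left _ _

lemma norm_le_inputNorm (d₁ : ℝ → U₁) {d₂ : ℕ → U₂} (hd₂ : BddInputD d₂) (k : ℕ) :
    ‖d₂ k‖ ≤ inputNorm d₁ d₂ :=
  (le_ciSup hd₂ k).trans (le_max_right _ _)

end Inputs

section Impulsive

variable {X U₁ U₂ : Type*} [NormedAddCommGroup X] [NormedAddCommGroup U₁] [NormedAddCommGroup U₂]
  {φc : ℝ → ℝ → X → (ℝ → U₁) → X} {φ : ℝ → X → (ℝ → U₁) → (ℕ → U₂) → X} {g : X → U₂ → X}
  {ξ η : ℝ → ℝ} {ξτ ητ : ℝ → ℝ → ℝ}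

def BoundOn (φ : ℝ → X → (ℝ → U₁) → (ℕ → U₂) → X) (S : Set ℝ) (β : ℝ → ℝ → ℝ)
    (γ : ℝ → ℝ) : Prop :=
  ∀ x d₁ d₂, BddInputC d₁ → BddInputD d₂ → ∀ t ∈ S,
    ‖φ t x d₁ d₂‖ ≤ β ‖x‖ t + γ (inputNorm d₁ d₂)

lemma norm_flow_le
    (hshift : ∀ (t t₀' s : ℝ) (x : X) (d₁ : ℝ → U₁), t₀' ≤ t →
      φc (t + s) (t₀' + s) x d₁ = φc t t₀' x (fun r => d₁ (r + s)))
    (hA1c : ∀ T ≥ (0:ℝ), ∀ t ∈ Icc (0:ℝ) T, ∀ (x : X) (d₁ : ℝ → U₁), BddInputC d₁ →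
      ‖φc t 0 x d₁‖ ≤ ξτ T ‖x‖ + ητ T (supNormC d₁))
    {s t T : ℝ} (hst : s ≤ t) (htT : t ≤ s + T) (x : X) {d₁ : ℝ → U₁} (hd₁ : BddInputC d₁) :
    ‖φc t s x d₁‖ ≤ ξτ T ‖x‖ + ητ T (supNormC d₁) := by
  have hshifted := hshift (t - s) 0 s x d₁ (by linarith)
  rw [sub_add_cancel, zero_add] at hshifted
  rw [hshifted, ← supNormC_comp_add_right d₁ s]
  exact hA1c T (by linarith) (t - s) ⟨by linarith, by linarith⟩ x _ (hd₁.comp_add_right s)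

lemma boundOn_Icc_of_eq_flow
    (hshift : ∀ (t t₀' s : ℝ) (x : X) (d₁ : ℝ → U₁), t₀' ≤ t →
      φc (t + s) (t₀' + s) x d₁ = φc t t₀' x (fun r => d₁ (r + s)))
    (hA1c : ∀ T ≥ (0:ℝ), ∀ t ∈ Icc (0:ℝ) T, ∀ (x : X) (d₁ : ℝ → U₁), BddInputC d₁ →
      ‖φc t 0 x d₁‖ ≤ ξτ T ‖x‖ + ητ T (supNormC d₁))
    {t₀ a : ℝ} (hη : ClassK (ητ (a - t₀)))
    (hflow : ∀ (x : X) (d₁ : ℝ → U₁) (d₂ : ℕ → U₂), ∀ t ∈ Icc t₀ a,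
      φ t x d₁ d₂ = φc t t₀ x d₁) :
    BoundOn φ (Icc t₀ a) (fun s _ => ξτ (a - t₀) s) (ητ (a - t₀)) := by
  intro x d₁ d₂ hd₁ _ t ht
  dsimp only
  rw [hflow x d₁ d₂ t ht]
  have hbound := norm_flow_le hshift hA1c ht.1 (by linarith [ht.2] : t ≤ t₀ + (a - t₀)) x hd₁
  linarith [hη.map_le_map (supNormC_nonneg hd₁) (supNormC_le_inputNorm d₁ d₂)]

lemma BoundOn.norm_jump_le (hA1d : ∀ (x : X) (μ : U₂), ‖g x μ‖ ≤ ξ ‖x‖ + η ‖μ‖)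
    (hξ : ClassK ξ) (hη : ClassK η) {S : Set ℝ} {Ξ H : ℝ → ℝ} (hΞ : ClassK Ξ) (hH : ClassK H)
    (hb : BoundOn φ S (fun s _ => Ξ s) H) {s : ℝ} (hs : s ∈ S) (k : ℕ) {x : X}
    {d₁ : ℝ → U₁} {d₂ : ℕ → U₂} (hd₁ : BddInputC d₁) (hd₂ : BddInputD d₂) :
    ‖g (φ s x d₁ d₂) (d₂ k)‖ ≤
      ξ (2 * Ξ ‖x‖) + (ξ (2 * H (inputNorm d₁ d₂)) + η (inputNorm d₁ d₂)) := by
  have hD := inputNorm_nonneg hd₁ d₂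
  calc ‖g (φ s x d₁ d₂) (d₂ k)‖ ≤ ξ ‖φ s x d₁ d₂‖ + η ‖d₂ k‖ := hA1d _ _
    _ ≤ ξ (2 * Ξ ‖x‖) + ξ (2 * H (inputNorm d₁ d₂)) + η (inputNorm d₁ d₂) :=
      add_le_add
        (hξ.map_le_of_le_add (norm_nonneg _) (hΞ.nonneg (norm_nonneg x)) (hH.nonneg hD)
          (hb x d₁ d₂ hd₁ hd₂ s hs))
        (hη.map_le_map (norm_nonneg _) (norm_le_inputNorm d₁ hd₂ k))
    _ = _ := add_assoc _ _ _

lemma BoundOn.extend_across_jump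
    (hshift : ∀ (t t₀' s : ℝ) (x : X) (d₁ : ℝ → U₁), t₀' ≤ t →
      φc (t + s) (t₀' + s) x d₁ = φc t t₀' x (fun r => d₁ (r + s)))
    (hA1c : ∀ T ≥ (0:ℝ), ∀ t ∈ Icc (0:ℝ) T, ∀ (x : X) (d₁ : ℝ → U₁), BddInputC d₁ →
      ‖φc t 0 x d₁‖ ≤ ξτ T ‖x‖ + ητ T (supNormC d₁))
    (hA1d : ∀ (x : X) (μ : U₂), ‖g x μ‖ ≤ ξ ‖x‖ + η ‖μ‖) (hξ : ClassK ξ) (hη : ClassK η)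
    {a b : ℝ} (hξT : ClassK (ξτ (b - a))) (hηT : ClassK (ητ (b - a))) {k : ℕ}
    (hflow : ∀ (x : X) (d₁ : ℝ → U₁) (d₂ : ℕ → U₂), ∀ t ∈ Ioc a b,
      φ t x d₁ d₂ = φc t a (g (φ a x d₁ d₂) (d₂ k)) d₁)
    {t₀ : ℝ} (ht₀ : t₀ ≤ a) {Ξ H : ℝ → ℝ} (hΞ : ClassK Ξ) (hH : ClassK H)
    (hb : BoundOn φ (Icc t₀ a) (fun s _ => Ξ s) H) :
    BoundOn φ (Icc t₀ b) (fun s _ => Ξ s + ξτ (b - a) (2 * ξ (2 * Ξ s)))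
      (fun r => H r + (ξτ (b - a) (2 * (ξ (2 * H r) + η r)) + ητ (b - a) r)) := by
  intro x d₁ d₂ hd₁ hd₂ t ht
  dsimp only
  have hD := inputNorm_nonneg hd₁ d₂
  have hΞx := hΞ.nonneg (norm_nonneg x)
  have hjump := hb.norm_jump_le hA1d hξ hη hΞ hH ⟨ht₀, le_rfl⟩ k (x := x) hd₁ hd₂
  have hjump_nonneg₁ := hξ.nonneg (by linarith : 0 ≤ 2 * Ξ ‖x‖)
  have hjump_nonneg₂ := add_nonneg (hξ.nonneg (by linarith [hH.nonneg hD] :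
    0 ≤ 2 * H (inputNorm d₁ d₂))) (hη.nonneg hD)
  have hflow_nonneg₁ := hξT.nonneg (by linarith : 0 ≤ 2 * ξ (2 * Ξ ‖x‖))
  have hflow_nonneg₂ := hξT.nonneg (by linarith :
    0 ≤ 2 * (ξ (2 * H (inputNorm d₁ d₂)) + η (inputNorm d₁ d₂)))
  rcases le_or_gt t a with hta | hta
  · linarith [hb x d₁ d₂ hd₁ hd₂ t ⟨ht.1, hta⟩, hηT.nonneg hD]
  · rw [hflow x d₁ d₂ t ⟨hta, ht.2⟩]
    have hflow_le := norm_flow_le hshift hA1c hta.le (by linarith [ht.2] : t ≤ a + (b - a))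
      (g (φ a x d₁ d₂) (d₂ k)) hd₁
    linarith [hξT.map_le_of_le_add (norm_nonneg _) hjump_nonneg₁ hjump_nonneg₂ hjump, hH.nonneg hD,
      hηT.map_le_map (supNormC_nonneg hd₁) (supNormC_le_inputNorm d₁ d₂)]

lemma exists_boundOn_Icc_impulse_time
    (hshift : ∀ (t t₀' s : ℝ) (x : X) (d₁ : ℝ → U₁), t₀' ≤ t →
      φc (t + s) (t₀' + s) x d₁ = φc t t₀' x (fun r => d₁ (r + s)))
    (hA1c : ∀ T ≥ (0:ℝ), ∀ t ∈ Icc (0:ℝ) T, ∀ (x : X) (d₁ : ℝ → U₁), BddInputC d₁ →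
      ‖φc t 0 x d₁‖ ≤ ξτ T ‖x‖ + ητ T (supNormC d₁))
    (hA1d : ∀ (x : X) (μ : U₂), ‖g x μ‖ ≤ ξ ‖x‖ + η ‖μ‖) (hξ : ClassK ξ) (hη : ClassK η)
    (hξτ : ∀ T ≥ (0:ℝ), ClassK (ξτ T)) (hητ : ∀ T ≥ (0:ℝ), ClassK (ητ T))
    {τ : ℕ → ℝ} (hτ : StrictMono τ) {t₀ : ℝ} (ht₀ : t₀ ≤ τ 0)
    (hφ0 : ∀ (x : X) (d₁ : ℝ → U₁) (d₂ : ℕ → U₂), ∀ t ∈ Icc t₀ (τ 0),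
      φ t x d₁ d₂ = φc t t₀ x d₁)
    (hφk : ∀ (x : X) (d₁ : ℝ → U₁) (d₂ : ℕ → U₂) (k : ℕ), ∀ t ∈ Ioc (τ k) (τ (k+1)),
      φ t x d₁ d₂ = φc t (τ k) (g (φ (τ k) x d₁ d₂) (d₂ k)) d₁)
    (k : ℕ) :
    ∃ Ξ H : ℝ → ℝ, ClassK Ξ ∧ ClassK H ∧ BoundOn φ (Icc t₀ (τ k)) (fun s _ => Ξ s) H := by
  induction k with
  | zero =>
    have hT := sub_nonneg.2 ht₀
    exact ⟨_, _, hξτ _ hT, hητ _ hT, boundOn_Icc_of_eq_flow hshift hA1c (hητ _ hT) hφ0⟩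
  | succ k ih =>
    obtain ⟨Ξ, H, hΞ, hH, hb⟩ := ih
    have hT := sub_nonneg.2 (hτ k.lt_succ_self).le
    have hξT := hξτ _ hT
    have hηT := hητ _ hT
    refine ⟨_, _, ?_, ?_, hb.extend_across_jump hshift hA1c hA1d hξ hη hξT hηT
      (fun x d₁ d₂ => hφk x d₁ d₂ k) (ht₀.trans (hτ.monotone k.zero_le)) hΞ hH⟩
    · exact hΞ.add (hξT.comp ((hξ.comp (hΞ.const_mul two_pos)).const_mul two_pos))
    · exact hH.add ((hξT.comp (((hξ.comp (hH.const_mul two_pos)).add hη).const_mul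
        two_pos)).add hηT)

lemma exists_boundOn_Ioi_of_post_jump_estimate
    (hA1d : ∀ (x : X) (μ : U₂), ‖g x μ‖ ≤ ξ ‖x‖ + η ‖μ‖) (hξ : ClassK ξ) (hη : ClassK η)
    {βs : ℝ → ℝ → ℝ} {γs : ℝ → ℝ} (hβs : ClassKL βs) (hγs : ClassKInf γs) {τ₀ : ℝ}
    (hpost : ∀ (x : X) (d₁ : ℝ → U₁) (d₂ : ℕ → U₂), BddInputC d₁ → BddInputD d₂ →
      ∀ t, τ₀ < t → ‖φ t x d₁ d₂‖ ≤ βs ‖g (φ τ₀ x d₁ d₂) (d₂ 0)‖ t + γs (inputNorm d₁ d₂))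
    {S : Set ℝ} {Ξ H : ℝ → ℝ} (hΞ : ClassK Ξ) (hH : ClassK H)
    (hb : BoundOn φ S (fun s _ => Ξ s) H) (hτ₀ : τ₀ ∈ S) {T : ℝ} (hT : 0 ≤ T) (hτ₀T : τ₀ ≤ T) :
    ∃ β γ, ClassKL β ∧ ClassKInf γ ∧ BoundOn φ (Ioi T) β γ := by
  have hΞjump : ClassK fun s => 2 * ξ (2 * Ξ s) :=
    (hξ.comp (hΞ.const_mul two_pos)).const_mul two_pos
  have hHjump : ClassK fun r => 2 * (ξ (2 * H r) + η r) :=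
    ((hξ.comp (hH.const_mul two_pos)).add hη).const_mul two_pos
  refine ⟨_, _, hβs.comp_classK hΞjump, hγs.add_classK ((hβs.1 0 le_rfl).comp hHjump), ?_⟩
  intro x d₁ d₂ hd₁ hd₂ t ht
  dsimp only
  have ht0 : 0 ≤ t := hT.trans (le_of_lt ht)
  have hD := inputNorm_nonneg hd₁ d₂
  have hjump_nonneg₁ := hξ.nonneg (by linarith [hΞ.nonneg (norm_nonneg x)] : 0 ≤ 2 * Ξ ‖x‖)
  have hjump_nonneg₂ := add_nonneg (hξ.nonneg (by linarith [hH.nonneg hD] :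
    0 ≤ 2 * H (inputNorm d₁ d₂))) (hη.nonneg hD)
  have hsplit := (hβs.1 t ht0).map_le_of_le_add (norm_nonneg _) hjump_nonneg₁ hjump_nonneg₂
    (hb.norm_jump_le hA1d hξ hη hΞ hH hτ₀ 0 (x := x) hd₁ hd₂)
  have hdecay := (hβs.2 (2 * (ξ (2 * H (inputNorm d₁ d₂)) + η (inputNorm d₁ d₂)))
    (by linarith)).1 (mem_Ici.2 le_rfl) (mem_Ici.2 ht0) ht0
  linarith [hpost x d₁ d₂ hd₁ hd₂ t (hτ₀T.trans_lt ht)]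

lemma BoundOn.exists_classKL_of_Icc_of_Ioi {t₀ T : ℝ} {Ξ H : ℝ → ℝ} {β₁ : ℝ → ℝ → ℝ}
    {γ₁ : ℝ → ℝ} (hT : 0 ≤ T) (hΞ : ClassK Ξ) (hH : ClassK H) (hβ₁ : ClassKL β₁)
    (hγ₁ : ClassKInf γ₁) (hle : BoundOn φ (Icc t₀ T) (fun s _ => Ξ s) H)
    (hgt : BoundOn φ (Ioi T) β₁ γ₁) :
    ∃ β γ, ClassKL β ∧ ClassKInf γ ∧ BoundOn φ (Ici t₀) β γ := by
  refine ⟨_, _, hβ₁.add_exp_mul hΞ T, hγ₁.add_classK hH, ?_⟩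
  intro x d₁ d₂ hd₁ hd₂ t ht
  dsimp only
  have hD := inputNorm_nonneg hd₁ d₂
  have hΞx := hΞ.nonneg (norm_nonneg x)
  rcases le_or_gt t T with htT | htT
  · have hexp : Ξ ‖x‖ ≤ Real.exp (T - t) * Ξ ‖x‖ :=
      le_mul_of_one_le_left hΞx (Real.one_le_exp (by linarith))
    linarith [hle x d₁ d₂ hd₁ hd₂ t ⟨ht, htT⟩, hγ₁.1.nonneg hD,
      (hβ₁.1 _ (le_max_right t 0)).nonneg (norm_nonneg x)]
  · rw [max_eq_left (hT.trans htT.le)]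
    linarith [hgt x d₁ d₂ hd₁ hd₂ t htT, hH.nonneg hD, mul_nonneg (Real.exp_pos (T - t)).le hΞx]

end Impulsive

theorem stmt1_general
    {X U₁ U₂ : Type*} [NormedAddCommGroup X] [NormedAddCommGroup U₁] [NormedAddCommGroup U₂]
    -- the continuous dynamics φ_c and its axioms
    (φc : ℝ → ℝ → X → (ℝ → U₁) → X)
    (hshift : ∀ (t t₀' s : ℝ) (x : X) (d₁ : ℝ → U₁), t₀' ≤ t →
      φc (t + s) (t₀' + s) x d₁ = φc t t₀' x (fun r => d₁ (r + s)))
    -- the impulse times, initial time, jump map and the impulsive solution map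
    (τ : ℕ → ℝ) (hτ : StrictMono τ) (hτtop : Tendsto τ atTop atTop)
    (t₀ : ℝ) (ht₀ : t₀ ≤ τ 0)
    (g : X → U₂ → X)
    (φ : ℝ → X → (ℝ → U₁) → (ℕ → U₂) → X)
    (hφ0 : ∀ (x : X) (d₁ : ℝ → U₁) (d₂ : ℕ → U₂), ∀ t ∈ Icc t₀ (τ 0),
      φ t x d₁ d₂ = φc t t₀ x d₁)
    (hφk : ∀ (x : X) (d₁ : ℝ → U₁) (d₂ : ℕ → U₂) (k : ℕ), ∀ t ∈ Ioc (τ k) (τ (k+1)),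
      φ t x d₁ d₂ = φc t (τ k) (g (φ (τ k) x d₁ d₂) (d₂ k)) d₁)
    -- Assumption 1
    (ξ η : ℝ → ℝ) (ξτ ητ : ℝ → ℝ → ℝ)
    (hξ : ClassKInf ξ) (hη : ClassKInf η)
    (hξτ : ∀ T ≥ (0:ℝ), ClassKInf (ξτ T)) (hητ : ∀ T ≥ (0:ℝ), ClassKInf (ητ T))
    (hA1c : ∀ T ≥ (0:ℝ), ∀ t ∈ Icc (0:ℝ) T, ∀ (x : X) (d₁ : ℝ → U₁), BddInputC d₁ →
      ‖φc t 0 x d₁‖ ≤ ξτ T ‖x‖ + ητ T (supNormC d₁))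
    (hA1d : ∀ (x : X) (μ : U₂), ‖g x μ‖ ≤ ξ ‖x‖ + η ‖μ‖)
    -- the hypothesis: a KL-estimate from the post-jump state at τ₀
    (hyp : ∃ (βs : ℝ → ℝ → ℝ) (γs : ℝ → ℝ), ClassKL βs ∧ ClassKInf γs ∧
      ∀ (x : X) (d₁ : ℝ → U₁) (d₂ : ℕ → U₂), BddInputC d₁ → BddInputD d₂ →
        ∀ t, τ 0 < t →
          ‖φ t x d₁ d₂‖ ≤ βs ‖g (φ (τ 0) x d₁ d₂) (d₂ 0)‖ t +
            γs (max (supNormC d₁) (supNormD d₂))) :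
    -- conclusion: Σ is ISS
    ∃ (β : ℝ → ℝ → ℝ) (γ : ℝ → ℝ), ClassKL β ∧ ClassKInf γ ∧
      ∀ (x : X) (d₁ : ℝ → U₁) (d₂ : ℕ → U₂), BddInputC d₁ → BddInputD d₂ →
        ∀ t, t₀ ≤ t →
          ‖φ t x d₁ d₂‖ ≤ β ‖x‖ t + γ (max (supNormC d₁) (supNormD d₂)) := by
  obtain ⟨βs, γs, hβs, hγs, hpost⟩ := hyp
  -- `βs` says nothing at negative times, so the KL estimate is only used after some `τ N ≥ 0`.
  obtain ⟨N, hN⟩ := (hτtop.eventually_ge_atTop 0).exists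
  have hτ0N : τ 0 ≤ τ N := hτ.monotone N.zero_le
  obtain ⟨Ξ, H, hΞ, hH, hbefore⟩ := exists_boundOn_Icc_impulse_time hshift hA1c hA1d hξ.1 hη.1
    (fun T hT => (hξτ T hT).1) (fun T hT => (hητ T hT).1) hτ ht₀ hφ0 hφk N
  obtain ⟨β₁, γ₁, hβ₁, hγ₁, hafter⟩ := exists_boundOn_Ioi_of_post_jump_estimate hA1d hξ.1 hη.1
    hβs hγs hpost hΞ hH hbefore ⟨ht₀, hτ0N⟩ hN hτ0N
  obtain ⟨β, γ, hβ, hγ, hISS⟩ := hbefore.exists_classKL_of_Icc_of_Ioi hN hΞ hH hβ₁ hγ₁ hafter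
  exact ⟨β, γ, hβ, hγ, fun x d₁ d₂ hd₁ hd₂ t ht => hISS x d₁ d₂ hd₁ hd₂ t ht⟩

/-- Proposition 1: if the impulsive system `Σ` satisfies Assumption 1 and
all solutions satisfy a `𝒦𝓛 + 𝒦∞` estimate in terms of the state `φ(τ₀⁺)` right after the
first jump, for all `t > τ₀`, then `Σ` is ISS. -/
theorem stmt1
    {X U₁ U₂ : Type*} [NormedAddCommGroup X] [NormedAddCommGroup U₁] [NormedAddCommGroup U₂]
    -- the continuous dynamics φ_c and its axioms
    (φc : ℝ → ℝ → X → (ℝ → U₁) → X)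
    (hcont : ∀ (t₀' : ℝ) (x : X) (d₁ : ℝ → U₁),
      ContinuousOn (fun t => φc t t₀' x d₁) (Ici t₀'))
    (hinit : ∀ (t₀' : ℝ) (x : X) (d₁ : ℝ → U₁), φc t₀' t₀' x d₁ = x)
    (hcausal : ∀ (t₀' t : ℝ) (x : X) (d₁ d₁' : ℝ → U₁), t₀' ≤ t →
      (∀ s ∈ Icc t₀' t, d₁ s = d₁' s) → φc t t₀' x d₁ = φc t t₀' x d₁')
    (hcocycle : ∀ (t₀' τ' t : ℝ) (x : X) (d₁ : ℝ → U₁), t₀' ≤ τ' → τ' ≤ t →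
      φc t t₀' x d₁ = φc t τ' (φc τ' t₀' x d₁) d₁)
    (hshift : ∀ (t t₀' s : ℝ) (x : X) (d₁ : ℝ → U₁), t₀' ≤ t →
      φc (t + s) (t₀' + s) x d₁ = φc t t₀' x (fun r => d₁ (r + s)))
    -- the impulse times, initial time, jump map and the impulsive solution map
    (τ : ℕ → ℝ) (hτ : StrictMono τ) (hτtop : Tendsto τ atTop atTop)
    (t₀ : ℝ) (ht₀ : t₀ ≤ τ 0)
    (g : X → U₂ → X)
    (φ : ℝ → X → (ℝ → U₁) → (ℕ → U₂) → X)
    (hφ0 : ∀ (x : X) (d₁ : ℝ → U₁) (d₂ : ℕ → U₂), ∀ t ∈ Icc t₀ (τ 0),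
      φ t x d₁ d₂ = φc t t₀ x d₁)
    (hφk : ∀ (x : X) (d₁ : ℝ → U₁) (d₂ : ℕ → U₂) (k : ℕ), ∀ t ∈ Ioc (τ k) (τ (k+1)),
      φ t x d₁ d₂ = φc t (τ k) (g (φ (τ k) x d₁ d₂) (d₂ k)) d₁)
    -- Assumption 1
    (ξ η : ℝ → ℝ) (ξτ ητ : ℝ → ℝ → ℝ)
    (hξ : ClassKInf ξ) (hη : ClassKInf η)
    (hξτ : ∀ T ≥ (0:ℝ), ClassKInf (ξτ T)) (hητ : ∀ T ≥ (0:ℝ), ClassKInf (ητ T))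
    (hA1c : ∀ T ≥ (0:ℝ), ∀ t ∈ Icc (0:ℝ) T, ∀ (x : X) (d₁ : ℝ → U₁), BddInputC d₁ →
      ‖φc t 0 x d₁‖ ≤ ξτ T ‖x‖ + ητ T (supNormC d₁))
    (hA1d : ∀ (x : X) (μ : U₂), ‖g x μ‖ ≤ ξ ‖x‖ + η ‖μ‖)
    -- the hypothesis: a KL-estimate from the post-jump state at τ₀
    (hyp : ∃ (βs : ℝ → ℝ → ℝ) (γs : ℝ → ℝ), ClassKL βs ∧ ClassKInf γs ∧
      ∀ (x : X) (d₁ : ℝ → U₁) (d₂ : ℕ → U₂), BddInputC d₁ → BddInputD d₂ →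
        ∀ t, τ 0 < t →
          ‖φ t x d₁ d₂‖ ≤ βs ‖g (φ (τ 0) x d₁ d₂) (d₂ 0)‖ t +
            γs (max (supNormC d₁) (supNormD d₂))) :
    -- conclusion: Σ is ISS
    ∃ (β : ℝ → ℝ → ℝ) (γ : ℝ → ℝ), ClassKL β ∧ ClassKInf γ ∧
      ∀ (x : X) (d₁ : ℝ → U₁) (d₂ : ℕ → U₂), BddInputC d₁ → BddInputD d₂ →
        ∀ t, t₀ ≤ t →
          ‖φ t x d₁ d₂‖ ≤ β ‖x‖ t + γ (max (supNormC d₁) (supNormD d₂)) :=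
  stmt1_general φc hshift τ hτ hτtop t₀ ht₀ g φ hφ0 hφk ξ η ξτ ητ hξ hη hξτ hητ hA1c hA1d hyp
end

section
/- For every ε > 0, every twice continuously differentiable x : [0,l] → ℝ with x(0) = x(l) = 0, every y, ξ₂ ∈ ℝ and every continuous ξ₁ : [0,l] → ℝ, the following estimate holds: 2∫₀ˡ x(z)·(a² x''(z) + Φ(x(z)) + B(z) y + ξ₁(z)) dz + 2y·(c² y + ∫₀ˡ D(z) x(z) dz + ξ₂) ≤ (−2π²a²/l² + ε)·‖x‖²_{L²} + 2·‖B + D‖_{L²}·‖x‖_{L²}·|y| + (2c² + ε)·y² + ε⁻¹·(‖ξ₁‖²_{L²} + ξ₂²). (In matrix form this is the estimate U̇ ≤ ζᵀ(Ã₀ + εI)ζ + ε⁻¹‖ξ‖² for U(x,y) = ‖x‖²_{L²} + y², ζ = (‖x‖_{L²}, |y|)ᵀ and Ã₀ the symmetric 2×2 matrix with diagonal entries −2π²a²/l², 2c² and off-diagonal entries ‖B+D‖_{L²}.) -/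
open Set Real Filter Topology MeasureTheory

/-!
Expanding the left-hand side, integration by parts turns `∫ x x''` into `-∫ x'²`, and Wirtinger's
inequality `(π/l)² ∫ x² ≤ ∫ x'²` for functions vanishing at both ends bounds it by
`-(π/l)² ‖x‖²`; the term `∫ x Φ(x)` is nonpositive; the coupling term `y ∫ (B + D) x` is
bounded by Cauchy–Schwarz, and the disturbances by Young's inequality `2pq ≤ εp² + ε⁻¹q²`.

Wirtinger's inequality comes from the identity `x'² - k²x² - (w x²)' = (x' - w x)²` for
`w z = k cot (k z)`, `k = π/l`. The weight `w` has simple poles at `0` and `l`, where `x²`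
vanishes to second order, so `w x²` is continuous on `[0, l]` with zero boundary values, and the
FTC inequality for `(w x²)' ≤ x'² - k²x²` on `(0, l)` gives `0 ≤ ∫ (x'² - k²x²)`.
-/

noncomputable def L2norm (l : ℝ) (f : ℝ → ℝ) : ℝ :=
  Real.sqrt (∫ z in (0:ℝ)..l, (f z)^2)

theorem abs_integral_mul_le_sqrt_mul_sqrt {α : Type*} [MeasurableSpace α] {μ : Measure α}
    {f g : α → ℝ} (hf : Integrable (fun a => f a ^ 2) μ) (hg : Integrable (fun a => g a ^ 2) μ)
    (hfg : Integrable (fun a => f a * g a) μ) :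
    |∫ a, f a * g a ∂μ| ≤ √(∫ a, f a ^ 2 ∂μ) * √(∫ a, g a ^ 2 ∂μ) := by
  have hquad : ∀ t : ℝ, 0 ≤ (∫ a, f a ^ 2 ∂μ) * (t * t) + (-2 * ∫ a, f a * g a ∂μ) * t
      + ∫ a, g a ^ 2 ∂μ := by
    intro t
    have hexpand : ∫ a, (t * f a - g a) ^ 2 ∂μ = (∫ a, f a ^ 2 ∂μ) * (t * t)
        + (-2 * ∫ a, f a * g a ∂μ) * t + ∫ a, g a ^ 2 ∂μ := by
      have h : (fun a => (t * f a - g a) ^ 2)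
          = fun a => (t * t) * f a ^ 2 + (-2 * t) * (f a * g a) + g a ^ 2 := by
        funext a; ring
      rw [h, integral_add ((hf.const_mul _).fun_add (hfg.const_mul _)) hg,
        integral_add (hf.const_mul _) (hfg.const_mul _), integral_const_mul, integral_const_mul]
      ring
    exact hexpand ▸ integral_nonneg fun a => sq_nonneg _
  have hdiscrim := discrim_le_zero hquad
  rw [discrim] at hdiscrim
  rw [← sqrt_mul (integral_nonneg fun a => sq_nonneg _)]
  exact abs_le_sqrt (by linarith)

theorem two_mul_mul_le_mul_sq_add_inv_mul_sq {ε : ℝ} (hε : 0 < ε) (p q : ℝ) :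
    2 * (p * q) ≤ ε * p ^ 2 + ε⁻¹ * q ^ 2 := by
  have h : ε * p ^ 2 + ε⁻¹ * q ^ 2 - 2 * (p * q) = ε⁻¹ * (ε * p - q) ^ 2 := by
    field_simp; ring
  rw [← sub_nonneg, h]
  positivity

theorem tendsto_mul_cos_div_sin_nhdsNE_zero :
    Tendsto (fun t => t * (cos t / sin t)) (𝓝[≠] 0) (𝓝 1) := by
  have hslope : Tendsto (fun t => sin t / t) (𝓝[≠] 0) (𝓝 1) := by
    have := hasDerivAt_iff_tendsto_slope.mp (hasDerivAt_sin 0)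
    rw [cos_zero] at this
    refine this.congr fun t => ?_
    simp [slope_def_field]
  have hcos : Tendsto cos (𝓝[≠] 0) (𝓝 1) :=
    cos_zero ▸ continuous_cos.continuousAt.tendsto.mono_left nhdsWithin_le_nhds
  simpa [div_eq_mul_inv, mul_comm, mul_left_comm] using (hslope.inv₀ one_ne_zero).mul hcos

theorem tendsto_sub_mul_cot_nhdsNE {k a : ℝ} (hk : k ≠ 0) (ha : sin (k * a) = 0) :
    Tendsto (fun z => (z - a) * (k * (cos (k * z) / sin (k * z)))) (𝓝[≠] a) (𝓝 1) := by
  have hcos : cos (k * a) ≠ 0 := by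
    intro h; simpa [ha, h] using sin_sq_add_cos_sq (k * a)
  have hshift : Tendsto (fun z => k * (z - a)) (𝓝[≠] a) (𝓝[≠] 0) := by
    refine tendsto_nhdsWithin_of_tendsto_nhds_of_eventually_within _ ?_ ?_
    · have : Continuous fun z => k * (z - a) := by fun_prop
      simpa using this.continuousAt.tendsto.mono_left (nhdsWithin_le_nhds (a := a))
    · filter_upwards [self_mem_nhdsWithin] with z hz
      exact mul_ne_zero hk (sub_ne_zero.2 hz)
  refine (tendsto_mul_cos_div_sin_nhdsNE_zero.comp hshift).congr fun z => ?_
  have hz : k * z = k * (z - a) + k * a := by ring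
  simp only [Function.comp, hz, cos_add, sin_add, ha, mul_zero, sub_zero, add_zero]
  rw [mul_div_mul_right _ _ hcos]
  ring

theorem continuousAt_mul_sq_of_hasDerivAt {x w : ℝ → ℝ} {a x'a c : ℝ} (hx : HasDerivAt x x'a a)
    (hxa : x a = 0) (hw : Tendsto (fun z => (z - a) * w z) (𝓝[≠] a) (𝓝 c)) :
    ContinuousAt (fun z => w z * x z ^ 2) a := by
  rw [← continuousWithinAt_compl_self, ContinuousWithinAt, hxa]
  have hid : Tendsto (fun z => z - a) (𝓝[≠] a) (𝓝 0) := by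
    have : Continuous fun z : ℝ => z - a := by fun_prop
    simpa using this.continuousAt.tendsto.mono_left (nhdsWithin_le_nhds (a := a))
  have hlim := (hw.mul ((hasDerivAt_iff_tendsto_slope.mp hx).pow 2)).mul hid
  rw [zero_pow two_ne_zero, mul_zero]
  simp only [mul_zero] at hlim
  refine hlim.congr' ?_
  filter_upwards [self_mem_nhdsWithin] with z hz
  have hz' : z - a ≠ 0 := sub_ne_zero.2 hz
  simp only [slope_def_field, hxa, sub_zero]
  field_simp

theorem hasDerivAt_mul_cot {k z : ℝ} (hz : sin (k * z) ≠ 0) :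
    HasDerivAt (fun u => k * (cos (k * u) / sin (k * u)))
      (-(k ^ 2 + (k * (cos (k * z) / sin (k * z))) ^ 2)) z := by
  have hlin : HasDerivAt (fun u => k * u) k z := by
    simpa using (hasDerivAt_id z).const_mul k
  refine ((hlin.cos.div hlin.sin hz).const_mul k).congr_deriv ?_
  field_simp
  ring

theorem pi_div_sq_mul_integral_sq_le {l : ℝ} (hl : 0 < l) {x x' : ℝ → ℝ}
    (hx : ∀ z ∈ Icc 0 l, HasDerivAt x (x' z) z) (hx' : ContinuousOn x' (Icc 0 l))
    (hx0 : x 0 = 0) (hxl : x l = 0) :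
    (π / l) ^ 2 * ∫ z in 0..l, x z ^ 2 ≤ ∫ z in 0..l, x' z ^ 2 := by
  set k := π / l
  set w := fun z => k * (cos (k * z) / sin (k * z))
  have hk : 0 < k := div_pos pi_pos hl
  have hkl : k * l = π := div_mul_cancel₀ π hl.ne'
  have hxc : ContinuousOn x (Icc 0 l) := fun z hz => (hx z hz).continuousAt.continuousWithinAt
  have hsin : ∀ z ∈ Ioo 0 l, sin (k * z) ≠ 0 := fun z hz =>
    (sin_pos_of_pos_of_lt_pi (mul_pos hk hz.1) (hkl ▸ mul_lt_mul_of_pos_left hz.2 hk)).ne'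
  have hderiv : ∀ z ∈ Ioo 0 l, HasDerivAt (fun u => w u * x u ^ 2)
      (-(k ^ 2 + w z ^ 2) * x z ^ 2 + w z * (2 * x z * x' z)) z := fun z hz =>
    ((hasDerivAt_mul_cot (hsin z hz)).fun_mul
      ((hx z (Ioo_subset_Icc_self hz)).fun_pow 2)).congr_deriv (by norm_num; ring)
  have hcont : ContinuousOn (fun u => w u * x u ^ 2) (Icc 0 l) := by
    intro z hz
    refine ContinuousAt.continuousWithinAt ?_
    rcases eq_endpoints_or_mem_Ioo_of_mem_Icc hz with rfl | rfl | hz'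
    · exact continuousAt_mul_sq_of_hasDerivAt (hx 0 hz) hx0
        (tendsto_sub_mul_cot_nhdsNE hk.ne' (by simp))
    · exact continuousAt_mul_sq_of_hasDerivAt (hx z hz) hxl
        (tendsto_sub_mul_cot_nhdsNE hk.ne' (by rw [hkl, sin_pi]))
    · exact (hderiv z hz').continuousAt
  have hint : IntegrableOn (fun z => x' z ^ 2 - k ^ 2 * x z ^ 2) (Icc 0 l) :=
    ((hx'.pow 2).sub ((hxc.pow 2).const_smul (k ^ 2))).integrableOn_Icc
  have key := intervalIntegral.sub_le_integral_of_hasDeriv_right_of_le hl.le hcont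
    (fun z hz => (hderiv z hz).hasDerivWithinAt) hint fun z _ => by
      nlinarith [sq_nonneg (x' z - w z * x z)]
  rw [hx0, hxl, intervalIntegral.integral_sub, intervalIntegral.integral_const_mul] at key
  · simpa using key
  · exact (hx'.pow 2).intervalIntegrable_of_Icc hl.le
  · exact ((hxc.pow 2).const_smul (k ^ 2)).intervalIntegrable_of_Icc hl.le

theorem integral_mul_deriv_deriv_le {l : ℝ} (hl : 0 < l) {x x' x'' : ℝ → ℝ}
    (hx : ∀ z ∈ Icc 0 l, HasDerivAt x (x' z) z) (hx' : ∀ z ∈ Icc 0 l, HasDerivAt x' (x'' z) z)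
    (hx'' : ContinuousOn x'' (Icc 0 l)) (hx0 : x 0 = 0) (hxl : x l = 0) :
    ∫ z in 0..l, x z * x'' z ≤ -((π / l) ^ 2 * ∫ z in 0..l, x z ^ 2) := by
  have hx'c : ContinuousOn x' (Icc 0 l) := fun z hz => (hx' z hz).continuousAt.continuousWithinAt
  have hparts : ∫ z in 0..l, x z * x'' z = -∫ z in 0..l, x' z ^ 2 := by
    rw [intervalIntegral.integral_mul_deriv_eq_deriv_mul (fun z hz => hx z (uIcc_of_le hl.le ▸ hz))
      (fun z hz => hx' z (uIcc_of_le hl.le ▸ hz)) (hx'c.intervalIntegrable_of_Icc hl.le)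
      (hx''.intervalIntegrable_of_Icc hl.le), hx0, hxl]
    simp [sq]
  rw [hparts, neg_le_neg_iff]
  exact pi_div_sq_mul_integral_sq_le hl hx hx'c hx0 hxl

section L2norm

variable {l : ℝ}

theorem sq_L2norm (hl : 0 ≤ l) (f : ℝ → ℝ) : L2norm l f ^ 2 = ∫ z in 0..l, f z ^ 2 :=
  sq_sqrt (intervalIntegral.integral_nonneg hl fun _ _ => sq_nonneg _)

theorem abs_integral_mul_le_L2norm_mul_L2norm (hl : 0 ≤ l) {f g : ℝ → ℝ}
    (hf : ContinuousOn f (Icc 0 l)) (hg : ContinuousOn g (Icc 0 l)) :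
    |∫ z in 0..l, f z * g z| ≤ L2norm l f * L2norm l g := by
  have hint : ∀ {h : ℝ → ℝ}, ContinuousOn h (Icc 0 l) → IntegrableOn h (Ioc 0 l) :=
    fun hh => hh.integrableOn_Icc.mono_set Ioc_subset_Icc_self
  simp only [L2norm, intervalIntegral.integral_of_le hl]
  exact abs_integral_mul_le_sqrt_mul_sqrt (hint (hf.pow 2)) (hint (hg.pow 2)) (hint (hf.mul hg))

theorem two_mul_integral_mul_le (hl : 0 ≤ l) {ε : ℝ} (hε : 0 < ε) {f g : ℝ → ℝ}
    (hf : ContinuousOn f (Icc 0 l)) (hg : ContinuousOn g (Icc 0 l)) :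
    2 * ∫ z in 0..l, f z * g z ≤ ε * L2norm l f ^ 2 + ε⁻¹ * L2norm l g ^ 2 :=
  calc 2 * ∫ z in 0..l, f z * g z ≤ 2 * (L2norm l f * L2norm l g) := by
        gcongr; exact (le_abs_self _).trans (abs_integral_mul_le_L2norm_mul_L2norm hl hf hg)
    _ ≤ _ := two_mul_mul_le_mul_sq_add_inv_mul_sq hε _ _

end L2norm

theorem stmt5_general (l a c : ℝ) (hl : 0 < l)
    (Φ : ℝ → ℝ) (hΦcont : Continuous Φ) (hΦ : ∀ s : ℝ, s * Φ s ≤ 0)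
    (B D : ℝ → ℝ) (hB : ContinuousOn B (Icc 0 l)) (hD : ContinuousOn D (Icc 0 l))
    (ε : ℝ) (hε : 0 < ε)
    (x x' x'' : ℝ → ℝ)
    (hx : ∀ z ∈ Icc (0:ℝ) l, HasDerivAt x (x' z) z)
    (hx' : ∀ z ∈ Icc (0:ℝ) l, HasDerivAt x' (x'' z) z)
    (hx''c : ContinuousOn x'' (Icc 0 l))
    (hx0 : x 0 = 0) (hxl : x l = 0)
    (y ξ₂ : ℝ) (ξ₁ : ℝ → ℝ) (hξ₁ : ContinuousOn ξ₁ (Icc 0 l)) :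
    2 * (∫ z in (0:ℝ)..l, x z * (a^2 * x'' z + Φ (x z) + B z * y + ξ₁ z)) +
      2 * y * (c^2 * y + (∫ z in (0:ℝ)..l, D z * x z) + ξ₂) ≤
    (-2 * π^2 * a^2 / l^2 + ε) * (L2norm l x)^2 +
      2 * L2norm l (fun z => B z + D z) * L2norm l x * |y| +
      (2 * c^2 + ε) * y^2 + ε⁻¹ * ((L2norm l ξ₁)^2 + ξ₂^2) := by
  have hxc : ContinuousOn x (Icc 0 l) := fun z hz => (hx z hz).continuousAt.continuousWithinAt
  have hsplit : (∫ z in 0..l, x z * (a^2 * x'' z + Φ (x z) + B z * y + ξ₁ z)) +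
      y * ∫ z in 0..l, D z * x z = a ^ 2 * (∫ z in 0..l, x z * x'' z) +
        (∫ z in 0..l, x z * Φ (x z)) + y * (∫ z in 0..l, (B z + D z) * x z) +
        ∫ z in 0..l, x z * ξ₁ z := by
    rw [← intervalIntegral.integral_const_mul, ← intervalIntegral.integral_add,
      ← intervalIntegral.integral_const_mul, ← intervalIntegral.integral_const_mul,
      ← intervalIntegral.integral_add, ← intervalIntegral.integral_add,
      ← intervalIntegral.integral_add]
    · congr 1 with z; ring
    all_goals apply ContinuousOn.intervalIntegrable_of_Icc hl.le; fun_prop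
  have hdiffusion := mul_le_mul_of_nonneg_left
    (integral_mul_deriv_deriv_le hl hx hx' hx''c hx0 hxl) (sq_nonneg a)
  rw [← sq_L2norm hl.le] at hdiffusion
  have hΦint : ∫ z in 0..l, x z * Φ (x z) ≤ 0 := by
    rw [intervalIntegral.integral_of_le hl.le]
    exact integral_nonpos fun z => hΦ (x z)
  have hcoupling : y * ∫ z in 0..l, (B z + D z) * x z ≤
      L2norm l (fun z => B z + D z) * L2norm l x * |y| := by
    refine (le_abs_self _).trans ?_
    rw [abs_mul, mul_comm]
    gcongr
    exact abs_integral_mul_le_L2norm_mul_L2norm hl.le (hB.add hD) hxc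
  have hξ₁_bound := two_mul_integral_mul_le hl.le hε hxc hξ₁
  have hξ₂_bound := two_mul_mul_le_mul_sq_add_inv_mul_sq hε y ξ₂
  linear_combination
    2 * hsplit + 2 * hdiffusion + 2 * hΦint + 2 * hcoupling + hξ₁_bound + hξ₂_bound

/-- Proposition 2, estimate for `U̇`:
`2∫₀ˡ x·(a²x'' + Φ(x) + B y + ξ₁) + 2y·(c²y + ∫₀ˡ D x + ξ₂)
  ≤ (−2π²a²/l² + ε)‖x‖²_{L²} + 2‖B+D‖_{L²}‖x‖_{L²}|y| + (2c² + ε)y² + ε⁻¹(‖ξ₁‖²_{L²} + ξ₂²)`. -/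
theorem stmt5 (l a c : ℝ) (hl : 0 < l) (ha : 0 < a) (hc : 0 < c)
    (Φ : ℝ → ℝ) (hΦcont : Continuous Φ) (hΦ : ∀ s : ℝ, s * Φ s ≤ 0)
    (B D : ℝ → ℝ) (hB : ContinuousOn B (Icc 0 l)) (hD : ContinuousOn D (Icc 0 l))
    (ε : ℝ) (hε : 0 < ε)
    (x x' x'' : ℝ → ℝ)
    (hx : ∀ z ∈ Icc (0:ℝ) l, HasDerivAt x (x' z) z)
    (hx' : ∀ z ∈ Icc (0:ℝ) l, HasDerivAt x' (x'' z) z)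
    (hx''c : ContinuousOn x'' (Icc 0 l))
    (hx0 : x 0 = 0) (hxl : x l = 0)
    (y ξ₂ : ℝ) (ξ₁ : ℝ → ℝ) (hξ₁ : ContinuousOn ξ₁ (Icc 0 l)) :
    2 * (∫ z in (0:ℝ)..l, x z * (a^2 * x'' z + Φ (x z) + B z * y + ξ₁ z)) +
      2 * y * (c^2 * y + (∫ z in (0:ℝ)..l, D z * x z) + ξ₂) ≤
    (-2 * π^2 * a^2 / l^2 + ε) * (L2norm l x)^2 +
      2 * L2norm l (fun z => B z + D z) * L2norm l x * |y| +
      (2 * c^2 + ε) * y^2 + ε⁻¹ * ((L2norm l ξ₁)^2 + ξ₂^2) :=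
  stmt5_general l a c hl Φ hΦcont hΦ B D hB hD ε hε x x' x'' hx hx' hx''c hx0 hxl y ξ₂ ξ₁ hξ₁
end

section
/- Let Φ : ℝ → ℝ be continuously differentiable, and let x, x₀ : [0,l] → ℝ be continuously differentiable with x(0) = x(l) = x₀(0) = x₀(l) = 0. Suppose L₁ ≥ 0 is such that |Φ'(s) − Φ'(s̃)| ≤ L₁·|s − s̃| for all s, s̃ with |s|, |s̃| ≤ √l·max{‖x'‖_{L²}, ‖x₀'‖_{L²}} (a range containing all values of x and x₀). Then ‖(Φ∘x)' − (Φ∘x₀)'‖_{L²} ≤ (L₁·√l·‖x'‖_{L²} + ‖Φ'∘x₀‖_∞)·‖x' − x₀'‖_{L²}. (This is the local Lipschitz estimate for the Nemytskii operator x ↦ Φ∘x in the H¹₀-norm used in the well-posedness argument.) -/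
/-!
Split `Φ'(x) x' - Φ'(x₀) x₀' = (Φ'(x) - Φ'(x₀)) x' + Φ'(x₀) (x' - x₀')`. Since `x - x₀` vanishes
at `0`, the embedding `‖f‖_∞ ≤ √l ‖f'‖_{L²}` bounds the first factor pointwise by
`L₁ √l ‖x' - x₀'‖_{L²}`; the same embedding puts the values of `x` and `x₀` in the range where
`Φ'` is `L₁`-Lipschitz. The second factor is bounded by `‖Φ'∘x₀‖_∞`, and Minkowski's inequality
in `L²` turns the pointwise bound into the estimate.
-/

open Set

/-- `‖f‖_∞` on `[0,l]`. -/
noncomputable def CnormInf (l : ℝ) (f : ℝ → ℝ) : ℝ :=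
  sSup ((fun z => |f z|) '' Icc 0 l)

section L2norm

variable {l : ℝ} {f g : ℝ → ℝ}

lemma L2norm_nonneg (l : ℝ) (f : ℝ → ℝ) : 0 ≤ L2norm l f := Real.sqrt_nonneg _

lemma L2norm_sq (hl : 0 ≤ l) (f : ℝ → ℝ) : L2norm l f ^ 2 = ∫ z in (0:ℝ)..l, f z ^ 2 :=
  Real.sq_sqrt (intervalIntegral.integral_nonneg hl fun z _ => sq_nonneg (f z))

lemma L2norm_const_mul (l c : ℝ) (f : ℝ → ℝ) :
    L2norm l (fun z => c * f z) = |c| * L2norm l f := by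
  simp only [L2norm, mul_pow]
  rw [intervalIntegral.integral_const_mul, Real.sqrt_mul (sq_nonneg c), Real.sqrt_sq_eq_abs]

lemma L2norm_abs (l : ℝ) (f : ℝ → ℝ) : L2norm l (fun z => |f z|) = L2norm l f := by
  simp only [L2norm, sq_abs]

lemma L2norm_one (l : ℝ) : L2norm l (fun _ => 1) = Real.sqrt l := by
  simp [L2norm]

lemma L2norm_mono (hl : 0 ≤ l) (hf : ContinuousOn f (Icc 0 l)) (hg : ContinuousOn g (Icc 0 l))
    (h : ∀ z ∈ Icc 0 l, |f z| ≤ g z) : L2norm l f ≤ L2norm l g := by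
  refine Real.sqrt_le_sqrt (intervalIntegral.integral_mono_on hl
    ((hf.pow 2).intervalIntegrable_of_Icc hl) ((hg.pow 2).intervalIntegrable_of_Icc hl) ?_)
  intro z hz
  rw [← sq_abs (f z)]
  exact pow_le_pow_left₀ (abs_nonneg _) (h z hz) 2

lemma integral_add_mul_sq (hl : 0 ≤ l) (hf : ContinuousOn f (Icc 0 l))
    (hg : ContinuousOn g (Icc 0 l)) (t : ℝ) :
    ∫ z in (0:ℝ)..l, (f z + t * g z) ^ 2 =
      L2norm l f ^ 2 + 2 * t * (∫ z in (0:ℝ)..l, f z * g z) + t ^ 2 * L2norm l g ^ 2 := by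
  have hf2 : IntervalIntegrable (fun z => f z ^ 2) MeasureTheory.volume 0 l :=
    (hf.pow 2).intervalIntegrable_of_Icc hl
  have hg2 : IntervalIntegrable (fun z => g z ^ 2) MeasureTheory.volume 0 l :=
    (hg.pow 2).intervalIntegrable_of_Icc hl
  have hfg : IntervalIntegrable (fun z => f z * g z) MeasureTheory.volume 0 l :=
    (hf.mul hg).intervalIntegrable_of_Icc hl
  have expand : (fun z => (f z + t * g z) ^ 2) =
      fun z => f z ^ 2 + (2 * t * (f z * g z) + t ^ 2 * g z ^ 2) := by
    funext z; ring
  rw [expand, intervalIntegral.integral_add hf2 ((hfg.const_mul _).add (hg2.const_mul _)),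
    intervalIntegral.integral_add (hfg.const_mul _) (hg2.const_mul _),
    intervalIntegral.integral_const_mul, intervalIntegral.integral_const_mul,
    L2norm_sq hl, L2norm_sq hl, add_assoc]

lemma integral_mul_le_L2norm_mul (hl : 0 ≤ l) (hf : ContinuousOn f (Icc 0 l))
    (hg : ContinuousOn g (Icc 0 l)) :
    ∫ z in (0:ℝ)..l, f z * g z ≤ L2norm l f * L2norm l g := by
  set B := ∫ z in (0:ℝ)..l, f z * g z
  have hquad : ∀ t : ℝ, 0 ≤ L2norm l g ^ 2 * (t * t) + 2 * B * t + L2norm l f ^ 2 := by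
    intro t
    have hsq_nonneg : 0 ≤ ∫ z in (0:ℝ)..l, (f z + t * g z) ^ 2 :=
      intervalIntegral.integral_nonneg hl fun z _ => sq_nonneg _
    rw [integral_add_mul_sq hl hf hg] at hsq_nonneg
    linarith
  have hdiscrim := discrim_le_zero hquad
  rw [discrim] at hdiscrim
  refine le_of_sq_le_sq ?_ (mul_nonneg (L2norm_nonneg l f) (L2norm_nonneg l g))
  nlinarith

lemma L2norm_add_le (hl : 0 ≤ l) (hf : ContinuousOn f (Icc 0 l))
    (hg : ContinuousOn g (Icc 0 l)) :
    L2norm l (fun z => f z + g z) ≤ L2norm l f + L2norm l g := by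
  refine le_of_sq_le_sq ?_ (add_nonneg (L2norm_nonneg l f) (L2norm_nonneg l g))
  have hsq := integral_add_mul_sq hl hf hg 1
  simp only [one_mul, one_pow, mul_one] at hsq
  rw [L2norm_sq hl, hsq]
  nlinarith [integral_mul_le_L2norm_mul hl hf hg]

lemma L2norm_le_of_abs_le_add (hl : 0 ≤ l) {F : ℝ → ℝ} {a b : ℝ} (ha : 0 ≤ a) (hb : 0 ≤ b)
    (hF : ContinuousOn F (Icc 0 l)) (hf : ContinuousOn f (Icc 0 l))
    (hg : ContinuousOn g (Icc 0 l)) (h : ∀ z ∈ Icc 0 l, |F z| ≤ a * |f z| + b * |g z|) :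
    L2norm l F ≤ a * L2norm l f + b * L2norm l g := by
  have haf : ContinuousOn (fun z => a * |f z|) (Icc 0 l) := continuousOn_const.mul hf.abs
  have hbg : ContinuousOn (fun z => b * |g z|) (Icc 0 l) := continuousOn_const.mul hg.abs
  calc L2norm l F ≤ L2norm l (fun z => a * |f z| + b * |g z|) :=
        L2norm_mono hl hF (haf.add hbg) h
    _ ≤ L2norm l (fun z => a * |f z|) + L2norm l (fun z => b * |g z|) := L2norm_add_le hl haf hbg
    _ = a * L2norm l f + b * L2norm l g := by
        rw [L2norm_const_mul, L2norm_const_mul, L2norm_abs, L2norm_abs, abs_of_nonneg ha,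
          abs_of_nonneg hb]

lemma abs_le_sqrt_mul_L2norm_of_hasDerivAt {f' : ℝ → ℝ}
    (hf : ∀ z ∈ Icc 0 l, HasDerivAt f (f' z) z) (hf' : ContinuousOn f' (Icc 0 l))
    (hf0 : f 0 = 0) {z : ℝ} (hz : z ∈ Icc 0 l) :
    |f z| ≤ Real.sqrt l * L2norm l f' := by
  have hl : 0 ≤ l := hz.1.trans hz.2
  have hftc : ∫ y in (0:ℝ)..z, f' y = f z := by
    rw [intervalIntegral.integral_eq_sub_of_hasDerivAt (f := f), hf0, sub_zero]
    · intro y hy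
      rw [uIcc_of_le hz.1] at hy
      exact hf y (Icc_subset_Icc le_rfl hz.2 hy)
    · exact (hf'.mono (Icc_subset_Icc le_rfl hz.2)).intervalIntegrable_of_Icc hz.1
  calc |f z| ≤ ∫ y in (0:ℝ)..z, |f' y| :=
        hftc ▸ intervalIntegral.abs_integral_le_integral_abs hz.1
    _ ≤ ∫ y in (0:ℝ)..l, |f' y| * 1 := by
        simp only [mul_one]
        exact intervalIntegral.integral_mono_interval le_rfl hz.1 hz.2
          (Filter.Eventually.of_forall fun y => abs_nonneg (f' y))
          (hf'.abs.intervalIntegrable_of_Icc hl)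
    _ ≤ L2norm l (fun y => |f' y|) * L2norm l (fun _ => 1) :=
        integral_mul_le_L2norm_mul hl hf'.abs continuousOn_const
    _ = Real.sqrt l * L2norm l f' := by rw [L2norm_abs, L2norm_one, mul_comm]

end L2norm

lemma abs_le_CnormInf {l : ℝ} {f : ℝ → ℝ} (hf : ContinuousOn f (Icc 0 l)) {z : ℝ}
    (hz : z ∈ Icc 0 l) : |f z| ≤ CnormInf l f :=
  le_csSup (isCompact_Icc.image_of_continuousOn hf.abs).bddAbove (mem_image_of_mem _ hz)

lemma abs_mul_sub_mul_le (a b u v : ℝ) : |a * u - b * v| ≤ |a - b| * |u| + |b| * |u - v| := by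
  calc |a * u - b * v| = |(a - b) * u + b * (u - v)| := by ring_nf
    _ ≤ |a - b| * |u| + |b| * |u - v| := by
        rw [← abs_mul, ← abs_mul]; exact abs_add_le _ _

theorem stmt14_general (l : ℝ) (hl : 0 < l)
    (Φ' : ℝ → ℝ) (hΦ'c : Continuous Φ')
    (x x' x₀ x₀' : ℝ → ℝ)
    (hx : ∀ z ∈ Icc (0:ℝ) l, HasDerivAt x (x' z) z)
    (hx₀ : ∀ z ∈ Icc (0:ℝ) l, HasDerivAt x₀ (x₀' z) z)
    (hx'c : ContinuousOn x' (Icc 0 l)) (hx₀'c : ContinuousOn x₀' (Icc 0 l))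
    (hx0 : x 0 = 0) (hx₀0 : x₀ 0 = 0)
    (L₁ : ℝ) (hL₁ : 0 ≤ L₁)
    (hLip : ∀ s s₂ : ℝ,
      |s| ≤ Real.sqrt l * max (L2norm l x') (L2norm l x₀') →
      |s₂| ≤ Real.sqrt l * max (L2norm l x') (L2norm l x₀') →
      |Φ' s - Φ' s₂| ≤ L₁ * |s - s₂|) :
    L2norm l (fun z => Φ' (x z) * x' z - Φ' (x₀ z) * x₀' z) ≤
      (L₁ * Real.sqrt l * L2norm l x' + CnormInf l (fun z => Φ' (x₀ z))) *
        L2norm l (fun z => x' z - x₀' z) := by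
  have hxc : ContinuousOn x (Icc 0 l) := fun z hz => (hx z hz).continuousAt.continuousWithinAt
  have hx₀c : ContinuousOn x₀ (Icc 0 l) := fun z hz =>
    (hx₀ z hz).continuousAt.continuousWithinAt
  have hΦx₀c := hΦ'c.comp_continuousOn hx₀c
  set M := CnormInf l (fun z => Φ' (x₀ z))
  set δ := L2norm l (fun z => x' z - x₀' z)
  have hM : 0 ≤ M := (abs_nonneg _).trans (abs_le_CnormInf hΦx₀c ⟨le_rfl, hl.le⟩)
  have hΦ'_sub : ∀ z ∈ Icc 0 l, |Φ' (x z) - Φ' (x₀ z)| ≤ L₁ * Real.sqrt l * δ := fun z hz => by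
    have hdist : |x z - x₀ z| ≤ Real.sqrt l * δ :=
      abs_le_sqrt_mul_L2norm_of_hasDerivAt (f := fun z => x z - x₀ z)
        (fun z hz => (hx z hz).sub (hx₀ z hz)) (hx'c.sub hx₀'c) (by simp [hx0, hx₀0]) hz
    have hxz := abs_le_sqrt_mul_L2norm_of_hasDerivAt hx hx'c hx0 hz
    have hx₀z := abs_le_sqrt_mul_L2norm_of_hasDerivAt hx₀ hx₀'c hx₀0 hz
    calc |Φ' (x z) - Φ' (x₀ z)| ≤ L₁ * |x z - x₀ z| :=
          hLip _ _ (hxz.trans (by gcongr; exact le_max_left _ _))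
            (hx₀z.trans (by gcongr; exact le_max_right _ _))
      _ ≤ L₁ * Real.sqrt l * δ := by rw [mul_assoc]; gcongr
  calc _ ≤ L₁ * Real.sqrt l * δ * L2norm l x' + M * δ :=
        L2norm_le_of_abs_le_add hl.le
          (mul_nonneg (mul_nonneg hL₁ (Real.sqrt_nonneg l)) (L2norm_nonneg _ _)) hM
          (((hΦ'c.comp_continuousOn hxc).mul hx'c).sub (hΦx₀c.mul hx₀'c)) hx'c
          (hx'c.sub hx₀'c) fun z hz => (abs_mul_sub_mul_le _ _ _ _).trans
            (by gcongr; exacts [hΦ'_sub z hz, abs_le_CnormInf hΦx₀c hz])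
    _ = (L₁ * Real.sqrt l * L2norm l x' + M) * δ := by ring

/-- local Lipschitz estimate for the Nemytskii operator `x ↦ Φ∘x`
in the `H¹₀`-norm:  `‖(Φ∘x)' − (Φ∘x₀)'‖_{L²} ≤ (L₁·√l·‖x'‖_{L²} + ‖Φ'∘x₀‖_∞)·‖x' − x₀'‖_{L²}`,
where `L₁` is a Lipschitz constant of `Φ'` on the range `|s| ≤ √l·max{‖x'‖_{L²}, ‖x₀'‖_{L²}}`. -/
theorem stmt14 (l : ℝ) (hl : 0 < l)
    (Φ Φ' : ℝ → ℝ) (hΦ : ∀ s, HasDerivAt Φ (Φ' s) s) (hΦ'c : Continuous Φ')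
    (x x' x₀ x₀' : ℝ → ℝ)
    (hx : ∀ z ∈ Icc (0:ℝ) l, HasDerivAt x (x' z) z)
    (hx₀ : ∀ z ∈ Icc (0:ℝ) l, HasDerivAt x₀ (x₀' z) z)
    (hx'c : ContinuousOn x' (Icc 0 l)) (hx₀'c : ContinuousOn x₀' (Icc 0 l))
    (hx0 : x 0 = 0) (hxl : x l = 0) (hx₀0 : x₀ 0 = 0) (hx₀l : x₀ l = 0)
    (L₁ : ℝ) (hL₁ : 0 ≤ L₁)
    (hLip : ∀ s s₂ : ℝ,
      |s| ≤ Real.sqrt l * max (L2norm l x') (L2norm l x₀') →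
      |s₂| ≤ Real.sqrt l * max (L2norm l x') (L2norm l x₀') →
      |Φ' s - Φ' s₂| ≤ L₁ * |s - s₂|) :
    L2norm l (fun z => Φ' (x z) * x' z - Φ' (x₀ z) * x₀' z) ≤
      (L₁ * Real.sqrt l * L2norm l x' + CnormInf l (fun z => Φ' (x₀ z))) *
        L2norm l (fun z => x' z - x₀' z) :=
  stmt14_general l hl Φ' hΦ'c x x' x₀ x₀' hx hx₀ hx'c hx₀'c hx0 hx₀0 L₁ hL₁ hLip
end
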